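/- arXiv:1604.01153 — 3 statements merged into one kernel-verified Lean document; each statement's English description precedes it below -/
import Mathlib

section
/- Let K be a number field, let E be the elliptic curve over K given by a short Weierstrass equation y² = x³ + Ax + B, and let d ∈ K be a nonzero element that is not a square in K. Set L = K(√d), and let E^d denote the quadratic twist of E by d, given by y² = x³ + Ad²x + Bd³. If H is a subgroup of the torsion subgroup of E^d(K) of odd order, then there exists a subgroup J of the torsion subgroup of E(L) that is invariant under the action of Gal(K̄/K) and satisfies J ≅ H ⊕ E(K)_tor. -/
/-!
Let `s ∈ L` with `s² = d`. The change of variables `(x, y) ↦ (x / s², y / s³)` identifies `E^d` with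
`E` over `L`, so it embeds `E^d(K)` into `E(L)` by some `ψ`; take `J = ψ(H) + E(K)_tor`.
A point of `ψ(E^d(K))` has its `y`-coordinate in `K · s`, a point of `E(K)` in `K`, so the two
subgroups meet only in points with `y = 0`, i.e. of order dividing `2`, and these are trivial in
`ψ(H)` because `|H|` is odd: the sum is direct. An automorphism of `K̄/K` sends `s` to `±s`, hence
acts on `ψ(H)` as `±1` and trivially on `E(K)`, so `J` is Galois stable.
-/

open WeierstrassCurve WeierstrassCurve.Affine

lemma AddSubgroup.eq_zero_of_add_self_eq_zero {G : Type*} [AddGroup G] {H : AddSubgroup G}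
    (hH : Odd (Nat.card H)) {h : G} (hh : h ∈ H) (h2 : h + h = 0) : h = 0 := by
  rw [← AddMonoid.addOrderOf_eq_one_iff]
  exact Nat.eq_one_of_dvd_coprimes (Nat.coprime_two_left.mpr hH)
    (addOrderOf_dvd_of_nsmul_eq_zero (by rwa [two_nsmul])) (H.addOrderOf_dvd_natCard hh)

namespace AddMonoidHom

variable {A B G : Type*} [AddCommGroup A] [AddCommGroup B] [AddCommGroup G]

lemma range_coprod (f : A →+ G) (g : B →+ G) : (f.coprod g).range = f.range ⊔ g.range := by
  refine le_antisymm ?_ (sup_le ?_ ?_)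
  · rintro _ ⟨⟨a, b⟩, rfl⟩
    exact add_mem (AddSubgroup.mem_sup_left ⟨a, rfl⟩) (AddSubgroup.mem_sup_right ⟨b, rfl⟩)
  · rintro _ ⟨a, rfl⟩
    exact ⟨(a, 0), by simp⟩
  · rintro _ ⟨b, rfl⟩
    exact ⟨(0, b), by simp⟩

lemma coprod_injective {f : A →+ G} {g : B →+ G} (hf : Function.Injective f)
    (hg : Function.Injective g) (hfg : Disjoint f.range g.range) :
    Function.Injective (f.coprod g) := by
  rw [injective_iff_map_eq_zero]
  rintro ⟨a, b⟩ hab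
  simp only [coprod_apply] at hab
  have ha : f a = 0 := AddSubgroup.disjoint_def.mp hfg ⟨a, rfl⟩
    ⟨-b, by rw [map_neg, eq_neg_of_add_eq_zero_left hab]⟩
  rw [ha, zero_add] at hab
  rw [hf (ha.trans (map_zero f).symm), hg (hab.trans (map_zero g).symm), Prod.mk_zero_zero]

end AddMonoidHom

namespace AddSubgroup

variable {A B G : Type*} [AddCommGroup A] [AddCommGroup B] [AddCommGroup G]

lemma map_neg_hom (H : AddSubgroup A) (f : A →+ G) : H.map (-f) = H.map f := by
  ext x
  constructor <;> rintro ⟨a, ha, rfl⟩ <;> exact ⟨-a, neg_mem ha, by simp⟩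

noncomputable def supMapEquivProd {H : AddSubgroup A} {T : AddSubgroup B} {f : A →+ G}
    {g : B →+ G} (hf : Function.Injective f) (hg : Function.Injective g)
    (hfg : Disjoint (H.map f) (T.map g)) : ↥(H.map f ⊔ T.map g) ≃+ H × T :=
  have hrange : ((f.comp H.subtype).coprod (g.comp T.subtype)).range = H.map f ⊔ T.map g := by
    rw [AddMonoidHom.range_coprod, AddMonoidHom.range_comp, AddMonoidHom.range_comp,
      range_subtype, range_subtype]
  (AddEquiv.addSubgroupCongr hrange).symm.trans (AddMonoidHom.ofInjective
    (AddMonoidHom.coprod_injective (f := f.comp H.subtype) (g := g.comp T.subtype)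
      (hf.comp H.subtype_injective) (hg.comp T.subtype_injective)
      (by rwa [AddMonoidHom.range_comp, AddMonoidHom.range_comp, range_subtype,
        range_subtype]))).symm

end AddSubgroup

lemma eq_zero_of_algebraMap_eq_mul {K M : Type*} [Field K] [Field M] [Algebra K M] {t : M}
    (ht : t ∉ Set.range (algebraMap K M)) {a b : K}
    (hab : algebraMap K M a = t * algebraMap K M b) : a = 0 := by
  by_contra ha
  have hb : b ≠ 0 := by rintro rfl; simp [ha] at hab
  exact ht ⟨a / b, by rw [map_div₀, hab, mul_div_assoc, div_self (by simpa), mul_one]⟩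

namespace WeierstrassCurve

def VariableChange.scaling {R : Type*} [CommRing R] (u : Rˣ) : VariableChange R := ⟨u, 0, 0, 0⟩

section CommRing

variable {R : Type*} [CommRing R] (W : WeierstrassCurve R) (u : Rˣ)

open VariableChange

@[simp]
lemma scaling_a₁ : (scaling u • W).a₁ = ↑u⁻¹ * W.a₁ := by
  simp [variableChange_a₁, scaling]

@[simp]
lemma scaling_a₂ : (scaling u • W).a₂ = ↑u⁻¹ ^ 2 * W.a₂ := by
  simp [variableChange_a₂, scaling]

@[simp]
lemma scaling_a₃ : (scaling u • W).a₃ = ↑u⁻¹ ^ 3 * W.a₃ := by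
  simp [variableChange_a₃, scaling]

@[simp]
lemma scaling_a₄ : (scaling u • W).a₄ = ↑u⁻¹ ^ 4 * W.a₄ := by
  simp [variableChange_a₄, scaling]

@[simp]
lemma scaling_a₆ : (scaling u • W).a₆ = ↑u⁻¹ ^ 6 * W.a₆ := by
  simp [variableChange_a₆, scaling]

namespace Affine

lemma equation_scaling_iff (x y : R) :
    (scaling u • W).toAffine.Equation (↑u⁻¹ ^ 2 * x) (↑u⁻¹ ^ 3 * y) ↔
      W.toAffine.Equation x y := by
  rw [equation_iff', equation_iff']
  conv_rhs => rw [← Units.mul_right_eq_zero (u⁻¹ ^ 6)]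
  simp only [scaling_a₁, scaling_a₂, scaling_a₃, scaling_a₄, scaling_a₆]
  push_cast
  ring_nf

lemma nonsingular_scaling_iff (x y : R) :
    (scaling u • W).toAffine.Nonsingular (↑u⁻¹ ^ 2 * x) (↑u⁻¹ ^ 3 * y) ↔
      W.toAffine.Nonsingular x y := by
  rw [nonsingular_iff', nonsingular_iff', equation_scaling_iff]
  refine and_congr Iff.rfl (or_congr (not_congr ?_) (not_congr ?_))
  · conv_rhs => rw [← Units.mul_right_eq_zero (u⁻¹ ^ 4)]
    simp only [scaling_a₁, scaling_a₂, scaling_a₄]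
    push_cast
    ring_nf
  · conv_rhs => rw [← Units.mul_right_eq_zero (u⁻¹ ^ 3)]
    simp only [scaling_a₁, scaling_a₃]
    push_cast
    ring_nf

lemma negY_scaling (x y : R) :
    (scaling u • W).toAffine.negY (↑u⁻¹ ^ 2 * x) (↑u⁻¹ ^ 3 * y) =
      ↑u⁻¹ ^ 3 * W.toAffine.negY x y := by
  simp only [negY, scaling_a₁, scaling_a₃]
  ring

lemma addX_scaling (x₁ x₂ ℓ : R) :
    (scaling u • W).toAffine.addX (↑u⁻¹ ^ 2 * x₁) (↑u⁻¹ ^ 2 * x₂) (↑u⁻¹ * ℓ) =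
      ↑u⁻¹ ^ 2 * W.toAffine.addX x₁ x₂ ℓ := by
  simp only [addX, scaling_a₁, scaling_a₂]
  ring

lemma negAddY_scaling (x₁ x₂ y₁ ℓ : R) :
    (scaling u • W).toAffine.negAddY (↑u⁻¹ ^ 2 * x₁) (↑u⁻¹ ^ 2 * x₂) (↑u⁻¹ ^ 3 * y₁) (↑u⁻¹ * ℓ) =
      ↑u⁻¹ ^ 3 * W.toAffine.negAddY x₁ x₂ y₁ ℓ := by
  rw [negAddY, negAddY, addX_scaling]
  ring

lemma addY_scaling (x₁ x₂ y₁ ℓ : R) :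
    (scaling u • W).toAffine.addY (↑u⁻¹ ^ 2 * x₁) (↑u⁻¹ ^ 2 * x₂) (↑u⁻¹ ^ 3 * y₁) (↑u⁻¹ * ℓ) =
      ↑u⁻¹ ^ 3 * W.toAffine.addY x₁ x₂ y₁ ℓ := by
  rw [addY, addY, addX_scaling, negAddY_scaling, negY_scaling]

end Affine

end CommRing

section Field

variable {F : Type*} [Field F] [DecidableEq F] (W : WeierstrassCurve F) (u : Fˣ)

open VariableChange

namespace Affine

lemma slope_scaling (x₁ x₂ y₁ y₂ : F) :
    (scaling u • W).toAffine.slope (↑u⁻¹ ^ 2 * x₁) (↑u⁻¹ ^ 2 * x₂) (↑u⁻¹ ^ 3 * y₁)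
      (↑u⁻¹ ^ 3 * y₂) = ↑u⁻¹ * W.toAffine.slope x₁ x₂ y₁ y₂ := by
  have hu : (↑u⁻¹ : F) ≠ 0 := Units.ne_zero _
  simp only [slope, negY_scaling, mul_right_inj' (pow_ne_zero _ hu)]
  split_ifs with hx hy
  · rw [mul_zero]
  · simp only [scaling_a₁, scaling_a₂, scaling_a₄, ← mul_sub]
    rcases eq_or_ne (y₁ - W.toAffine.negY x₁ y₁) 0 with hD | hD
    · rw [hD, mul_zero, div_zero, div_zero, mul_zero]
    · field_simp
  · have hx : x₁ - x₂ ≠ 0 := sub_ne_zero.mpr hx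
    simp only [← mul_sub]
    field_simp

variable {W u} {W' : WeierstrassCurve F}

namespace Point

noncomputable def scaling (h : W' = VariableChange.scaling u • W) :
    W.toAffine.Point →+ W'.toAffine.Point where
  toFun
    | 0 => 0
    | .some x y hxy =>
      .some (↑u⁻¹ ^ 2 * x) (↑u⁻¹ ^ 3 * y) (h ▸ (nonsingular_scaling_iff W u x y).mpr hxy)
  map_zero' := rfl
  map_add' := by
    subst h
    have hu : (↑u⁻¹ : F) ≠ 0 := Units.ne_zero _
    rintro (_ | ⟨x₁, y₁, h₁⟩) (_ | ⟨x₂, y₂, h₂⟩)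
    any_goals rfl
    by_cases hxy : x₁ = x₂ ∧ y₁ = W.toAffine.negY x₂ y₂
    · rw [add_of_Y_eq hxy.1 hxy.2, add_of_Y_eq (by rw [hxy.1]) (by rw [hxy.2, negY_scaling])]
    · rw [add_some hxy, add_some fun h => hxy ⟨mul_left_cancel₀ (pow_ne_zero 2 hu) h.1,
        mul_left_cancel₀ (pow_ne_zero 3 hu) (by rw [h.2, negY_scaling])⟩]
      simp only [slope_scaling, addX_scaling, addY_scaling]

lemma scaling_some (h : W' = VariableChange.scaling u • W) {x y : F}
    (hxy : W.toAffine.Nonsingular x y) :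
    scaling h (.some x y hxy) =
      .some (↑u⁻¹ ^ 2 * x) (↑u⁻¹ ^ 3 * y) (h ▸ (nonsingular_scaling_iff W u x y).mpr hxy) :=
  rfl

lemma scaling_injective (h : W' = VariableChange.scaling u • W) :
    Function.Injective (scaling h) := by
  have hu : (↑u⁻¹ : F) ≠ 0 := Units.ne_zero _
  rintro (_ | _) (_ | _) hPQ
  any_goals contradiction
  · rfl
  · simp only [scaling_some, some.injEq] at hPQ ⊢
    exact ⟨mul_left_cancel₀ (pow_ne_zero 2 hu) hPQ.1, mul_left_cancel₀ (pow_ne_zero 3 hu) hPQ.2⟩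

end Point

end Affine

end Field

section QuadraticTwist

variable {K : Type*} [Field K]

-- Only meaningful for `W` in short normal form, where it is `y² = x³ + a₄d²x + a₆d³`.
def quadraticTwist (W : WeierstrassCurve K) (d : K) : WeierstrassCurve K :=
  ⟨0, 0, 0, W.a₄ * d ^ 2, W.a₆ * d ^ 3⟩

variable {W : WeierstrassCurve K} [W.IsShortNF] {d : K} {M N : Type*} [Field M] [Algebra K M]
  [Field N] [Algebra K N]

lemma baseChange_eq_scaling_smul_quadraticTwist {t : Mˣ} (ht : (t : M) ^ 2 = algebraMap K M d) :
    W.baseChange M = VariableChange.scaling t • (W.quadraticTwist d).baseChange M := by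
  have h4 : (↑t⁻¹ : M) ^ 4 * algebraMap K M d ^ 2 = 1 := by
    rw [← ht, Units.val_inv_eq_inv_val]; field_simp
  have h6 : (↑t⁻¹ : M) ^ 6 * algebraMap K M d ^ 3 = 1 := by
    rw [← ht, Units.val_inv_eq_inv_val]; field_simp
  ext <;> simp only [baseChange, map, scaling_a₁, scaling_a₂, scaling_a₃, scaling_a₄, scaling_a₆,
    quadraticTwist, a₁_of_isShortNF, a₂_of_isShortNF, a₃_of_isShortNF, map_zero, mul_zero, map_mul,
    map_pow]
  · linear_combination (-algebraMap K M W.a₄) * h4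
  · linear_combination (-algebraMap K M W.a₆) * h6

namespace Affine.Point

variable [DecidableEq K] [DecidableEq M] [DecidableEq N]

noncomputable def ofQuadraticTwist {t : Mˣ} (ht : (t : M) ^ 2 = algebraMap K M d) :
    ((W.quadraticTwist d)⁄K).Point →+ (W⁄M).Point :=
  (scaling (baseChange_eq_scaling_smul_quadraticTwist ht)).comp (baseChange K M)

lemma map_comp_ofQuadraticTwist (τ : M →ₐ[K] N) {t : Mˣ} {t' : Nˣ}
    (ht : (t : M) ^ 2 = algebraMap K M d) (ht' : (t' : N) ^ 2 = algebraMap K N d)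
    (htt' : τ t = t') : (map τ).comp (ofQuadraticTwist ht) = ofQuadraticTwist (W := W) ht' := by
  ext (_ | ⟨x, y, h⟩)
  · rfl
  · simp only [ofQuadraticTwist, AddMonoidHom.comp_apply, map_some, scaling_some, map_mul,
      map_pow, Units.val_inv_eq_inv_val, map_inv₀, htt', Algebra.ofId_apply, AlgHom.commutes]

lemma ofQuadraticTwist_neg {t : Mˣ} (ht : (t : M) ^ 2 = algebraMap K M d)
    (ht' : ((-t : Mˣ) : M) ^ 2 = algebraMap K M d) :
    ofQuadraticTwist ht' = -ofQuadraticTwist (W := W) ht := by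
  ext (_ | ⟨x, y, h⟩)
  · rfl
  · simp only [ofQuadraticTwist, AddMonoidHom.comp_apply, AddMonoidHom.neg_apply, map_some,
      scaling_some, neg_some, some.injEq]
    simp only [Units.val_neg, Units.val_inv_eq_inv_val, inv_neg, even_two, Even.neg_pow, inv_pow,
      Algebra.ofId_apply, negY, baseChange_a₁, a₁_of_isCharNeTwoNF, _root_.map_zero, zero_mul,
      sub_zero, baseChange_a₃, a₃_of_isCharNeTwoNF, true_and]
    ring

lemma add_self_eq_zero_of_ofQuadraticTwist_eq_baseChange {t : Mˣ}
    (ht : (t : M) ^ 2 = algebraMap K M d) (htK : (t : M) ∉ Set.range (algebraMap K M))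
    {P : ((W.quadraticTwist d)⁄K).Point} {Q : (W⁄K).Point}
    (hPQ : ofQuadraticTwist ht P = baseChange K M Q) : P + P = 0 := by
  rcases P with _ | ⟨x, y, h⟩
  · exact add_zero 0
  rcases Q with _ | ⟨x', y', h'⟩
  · exact absurd hPQ (some_ne_zero _)
  simp only [ofQuadraticTwist, AddMonoidHom.comp_apply, map_some, scaling_some, some.injEq,
    Algebra.ofId_apply] at hPQ
  -- `y = t³ y' = t · d y'` with `t ∉ K`
  have hy : y = 0 := by
    refine eq_zero_of_algebraMap_eq_mul htK (b := d * y') ?_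
    rw [map_mul, ← ht, ← hPQ.2, Units.val_inv_eq_inv_val]
    field_simp
  exact add_self_of_Y_eq (by simp [hy, negY, quadraticTwist])

lemma ofQuadraticTwist_injective {t : Mˣ} (ht : (t : M) ^ 2 = algebraMap K M d) :
    Function.Injective (ofQuadraticTwist (W := W) ht) :=
  (scaling_injective (baseChange_eq_scaling_smul_quadraticTwist ht)).comp (map_injective _)

variable (H : AddSubgroup ((W.quadraticTwist d)⁄K).Point) (T : AddSubgroup (W⁄K).Point)

noncomputable def twistSum {t : Mˣ} (ht : (t : M) ^ 2 = algebraMap K M d) :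
    AddSubgroup (W⁄M).Point :=
  H.map (ofQuadraticTwist ht) ⊔ T.map (baseChange K M)

variable {H T}

lemma twistSum_le_torsion {t : Mˣ} (ht : (t : M) ^ 2 = algebraMap K M d)
    (hH : H ≤ AddCommGroup.torsion _) (hT : T ≤ AddCommGroup.torsion _) :
    twistSum H T ht ≤ AddCommGroup.torsion _ :=
  sup_le ((AddSubgroup.map_mono hH).trans (AddCommGroup.map_torsion_le _))
    ((AddSubgroup.map_mono hT).trans (AddCommGroup.map_torsion_le _))

lemma map_twistSum (τ : M →ₐ[K] N) {t : Mˣ} {t' : Nˣ}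
    (ht : (t : M) ^ 2 = algebraMap K M d) (ht' : (t' : N) ^ 2 = algebraMap K N d)
    (htt' : τ t = t') : (twistSum H T ht).map (map τ) = twistSum H T ht' := by
  rw [twistSum, twistSum, AddSubgroup.map_sup, AddSubgroup.map_map, AddSubgroup.map_map,
    map_comp_ofQuadraticTwist τ ht ht' htt',
    show (map τ).comp (baseChange K M) = baseChange (W' := W) K N from
      AddMonoidHom.ext (map_baseChange τ)]

lemma twistSum_neg {t : Mˣ} (ht : (t : M) ^ 2 = algebraMap K M d)
    (ht' : ((-t : Mˣ) : M) ^ 2 = algebraMap K M d) : twistSum H T ht' = twistSum H T ht := by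
  rw [twistSum, twistSum, ofQuadraticTwist_neg ht ht', AddSubgroup.map_neg_hom]

noncomputable def twistSumEquivProd {t : Mˣ} (ht : (t : M) ^ 2 = algebraMap K M d)
    (htK : (t : M) ∉ Set.range (algebraMap K M)) (hH : ∀ P ∈ H, P + P = 0 → P = 0) :
    twistSum H T ht ≃+ H × T :=
  AddSubgroup.supMapEquivProd (ofQuadraticTwist_injective ht) (map_injective _) <| by
    refine AddSubgroup.disjoint_def.mpr ?_
    rintro _ ⟨P, hP, rfl⟩ ⟨Q, -, hQ⟩
    rw [hH P hP (add_self_eq_zero_of_ofQuadraticTwist_eq_baseChange ht htK hQ.symm),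
      _root_.map_zero]

end Affine.Point

end QuadraticTwist

end WeierstrassCurve

open Classical in
theorem twist_subgroup_transfer_general {K : Type*} [Field K] (A B d : K)
    (hd' : ¬ IsSquare d)
    (W : WeierstrassCurve K) (hW : W = ⟨0, 0, 0, A, B⟩)
    (Wd : WeierstrassCurve K) (hWd : Wd = ⟨0, 0, 0, A * d ^ 2, B * d ^ 3⟩)
    (L : IntermediateField K (AlgebraicClosure K))
    (hLd : ∃ s : L, s ^ 2 = algebraMap K L d)
    (H : AddSubgroup (Affine.Point (Affine.baseChange Wd K)))
    (hHtor : H ≤ AddCommGroup.torsion (Affine.Point (Affine.baseChange Wd K)))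
    (hHodd : Odd (Nat.card H)) :
    ∃ J : AddSubgroup (Affine.Point (Affine.baseChange W L)),
      J ≤ AddCommGroup.torsion (Affine.Point (Affine.baseChange W L)) ∧
      (∀ σ : AlgebraicClosure K ≃ₐ[K] AlgebraicClosure K,
        (J.map (Point.map (W' := W) L.val)).map (Point.map (W' := W) σ.toAlgHom) = J.map (Point.map (W' := W) L.val)) ∧
      Nonempty (J ≃+ H × AddCommGroup.torsion (Affine.Point (Affine.baseChange W K))) := by
  obtain ⟨s, hs⟩ := hLd
  obtain rfl : Wd = W.quadraticTwist d := by rw [hWd, hW]; rfl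
  have : W.IsShortNF := by subst hW; exact ⟨rfl, rfl, rfl⟩
  have hs0 : s ≠ 0 := by
    rintro rfl
    exact hd' ⟨0, (algebraMap K L).injective (by simpa [eq_comm] using hs)⟩
  have hsK : s ∉ Set.range (algebraMap K L) := by
    rintro ⟨k, rfl⟩
    exact hd' ⟨k, (algebraMap K L).injective (by rw [← hs, map_mul, sq])⟩
  let s' := Units.mk0 s hs0
  have hs' : (s' : L) ^ 2 = algebraMap K L d := hs
  let s'' := Units.map (L.val : L →* AlgebraicClosure K) s'
  have hs'' : (s'' : AlgebraicClosure K) ^ 2 = algebraMap K _ d := by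
    rw [Units.coe_map, Units.val_mk0, MonoidHom.coe_coe, ← map_pow, hs, AlgHom.commutes]
  refine ⟨Point.twistSum H _ hs', Point.twistSum_le_torsion hs' hHtor le_rfl, fun σ => ?_,
    ⟨Point.twistSumEquivProd hs' hsK fun _ hP => AddSubgroup.eq_zero_of_add_self_eq_zero hHodd hP⟩⟩
  rw [Point.map_twistSum L.val hs' hs'' rfl]
  have hσ : σ s'' ^ 2 = s'' ^ 2 := by rw [← map_pow, hs'', AlgEquiv.commutes]
  rcases sq_eq_sq_iff_eq_or_eq_neg.mp hσ with hσ | hσ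
  · exact Point.map_twistSum σ.toAlgHom hs'' hs'' hσ
  · rw [Point.map_twistSum σ.toAlgHom hs'' (t' := -s'') (by rwa [Units.val_neg, neg_sq]) hσ,
      Point.twistSum_neg]

open Classical in
/-- Let `K` be a number field, `E : y² = x³ + Ax + B` an elliptic curve over `K`, `d ∈ K` a
nonzero nonsquare, `L = K(√d)` (realized as an intermediate field of `K̄/K` of degree 2
containing a square root of `d`), and `E^d : y² = x³ + Ad²x + Bd³` the quadratic twist. If `H`
is a subgroup of the torsion subgroup of `E^d(K)` of odd order, then there is a subgroup `J` of
the torsion subgroup of `E(L)`, invariant under `Gal(K̄/K)`, with `J ≅ H ⊕ E(K)_tor`. -/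
theorem twist_subgroup_transfer {K : Type*} [Field K] [NumberField K] (A B d : K)
    (hd : d ≠ 0) (hd' : ¬ IsSquare d)
    (W : WeierstrassCurve K) (hW : W = ⟨0, 0, 0, A, B⟩) (hΔ : W.Δ ≠ 0)
    (Wd : WeierstrassCurve K) (hWd : Wd = ⟨0, 0, 0, A * d ^ 2, B * d ^ 3⟩)
    (L : IntermediateField K (AlgebraicClosure K))
    (hL2 : Module.finrank K L = 2)
    (hLd : ∃ s : L, s ^ 2 = algebraMap K L d)
    (H : AddSubgroup (Affine.Point (Affine.baseChange Wd K)))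
    (hHtor : H ≤ AddCommGroup.torsion (Affine.Point (Affine.baseChange Wd K)))
    (hHodd : Odd (Nat.card H)) :
    ∃ J : AddSubgroup (Affine.Point (Affine.baseChange W L)),
      J ≤ AddCommGroup.torsion (Affine.Point (Affine.baseChange W L)) ∧
      (∀ σ : AlgebraicClosure K ≃ₐ[K] AlgebraicClosure K,
        (J.map (Point.map (W' := W) L.val)).map (Point.map (W' := W) σ.toAlgHom) = J.map (Point.map (W' := W) L.val)) ∧
      Nonempty (J ≃+ H × AddCommGroup.torsion (Affine.Point (Affine.baseChange W K))) :=
  twist_subgroup_transfer_general A B d hd' W hW Wd hWd L hLd H hHtor hHodd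
end

section
/- Let p be a prime with p ≡ 2 (mod 3) and let E be an elliptic curve over the finite field F_p given by y² = x³ + B (i.e. a short Weierstrass equation with A = 0, so j(E) = 0). Then |E(F_p)| = p + 1 and |E(F_{p²})| = (p + 1)². -/
/-!
Count points fibrewise over `y`: `#E(F) = 1 + ∑_y #{x | x³ = y² - B}`. Over `𝔽_p` cubing is a
bijection since `3 ∤ p - 1`, so every fibre has exactly one point.

Over `K = 𝔽_{p²}` write the fibre sizes with a cubic character `ψ` and a quadratic character `χ`.
As `B` is a norm from `K`, it is a `(p + 1)`-st power in `K`, hence a square and a cube, and the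
affine count becomes `p² + J(χ, ψ) + J(χ, ψ²)`. Frobenius turns `ψ` into `ψ ^ p = ψ²`, so the two
Jacobi sums agree, and `J(χ, ψ) J(χ⁻¹, ψ⁻¹) = p²` gives `J(χ, ψ) = ±p`. For the sign: the fibres
over `y` with `y² ≠ B` have `0` or `3` points and exactly two `y` have `y² = B`, so
`3 ∣ #E(K)`, which rules out `#E(K) = (p - 1)²`.
-/

open WeierstrassCurve Finset

lemma Nat.add_one_dvd_sq_sub_one (p : ℕ) : p + 1 ∣ p ^ 2 - 1 := by
  rw [← one_pow 2, Nat.sq_sub_sq]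
  exact dvd_mul_right _ _

section RootCount

variable {F : Type*} [Field F] [Fintype F]

lemma FiniteField.exists_isPrimitiveRoot_of_dvd_card_sub_one (n : ℕ) [Fact n.Prime]
    (h : n ∣ Fintype.card F - 1) : ∃ ζ : F, IsPrimitiveRoot ζ n := by
  classical
  obtain ⟨u, hu⟩ := exists_prime_orderOf_dvd_card (G := Fˣ) n (by rwa [Fintype.card_units])
  exact ⟨u, IsPrimitiveRoot.coe_units_iff.mpr (hu ▸ IsPrimitiveRoot.orderOf u)⟩

variable [DecidableEq F] {n : ℕ}

lemma card_filter_pow_eq_zero (hn : n ≠ 0) : #{x : F | x ^ n = 0} = 1 := by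
  simp only [pow_eq_zero_iff hn, filter_eq', mem_univ, if_true, card_singleton]

lemma card_filter_pow_eq_of_isPrimitiveRoot [NeZero n] {ζ : F} (hζ : IsPrimitiveRoot ζ n) {t : F}
    (ht : t ≠ 0) : #{x | x ^ n = t} = if ∃ a, a ^ n = t then n else 0 := by
  have hroots : ({x | x ^ n = t} : Finset F) = (Polynomial.nthRoots n t).toFinset := by
    ext x
    simp [Polynomial.mem_nthRoots (NeZero.pos n)]
  rw [hroots, Multiset.toFinset_card_of_nodup (hζ.nthRoots_nodup ht)]
  convert hζ.card_nthRoots t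

lemma card_filter_pow_eq_of_bijective (h : Function.Bijective fun x : F => x ^ n) (t : F) :
    #{x | x ^ n = t} = 1 := by
  obtain ⟨a, ha⟩ := h.2 t
  rw [card_eq_one]
  exact ⟨a, by ext x; simpa [← ha] using h.1.eq_iff⟩

lemma FiniteField.pow_bijective_of_coprime (hn : n ≠ 0) (h : (Fintype.card F - 1).Coprime n) :
    Function.Bijective fun x : F => x ^ n := by
  refine Finite.injective_iff_bijective.mp fun x y hxy => ?_
  rcases eq_or_ne x 0 with rfl | hx
  · exact (pow_eq_zero_iff hn).mp (by simpa [zero_pow hn] using hxy.symm) |>.symm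
  rcases eq_or_ne y 0 with rfl | hy
  · exact (pow_eq_zero_iff hn).mp (by simpa [zero_pow hn] using hxy)
  have hunits : (Nat.card Fˣ).Coprime n := by rwa [Nat.card_eq_fintype_card, Fintype.card_units]
  have := hunits.pow_left_bijective.1 (a₁ := Units.mk0 x hx) (a₂ := Units.mk0 y hy)
    (Units.ext (by simpa using hxy))
  simpa using congrArg Units.val this

end RootCount

lemma Fintype.sum_comp_eq_sum_card_mul {F R : Type*} [Fintype F] [DecidableEq F]
    [CommSemiring R] (g : F → F) (f : F → R) : ∑ y, f (g y) = ∑ s, (#{y | g y = s} : R) * f s := by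
  rw [← Finset.sum_fiberwise univ g]
  refine Finset.sum_congr rfl fun s _ => ?_
  rw [Finset.sum_congr rfl fun y hy => by rw [(mem_filter.mp hy).2], Finset.sum_const,
    nsmul_eq_mul]

namespace MulChar

variable {F : Type*} [Field F]

lemma apply_pow_eq_one {R : Type*} [CommMonoidWithZero R] (ψ : MulChar F R) {n : ℕ}
    (hn : orderOf ψ ∣ n) {t : F} (ht : t ≠ 0) : ψ t ^ n = 1 := by
  rcases eq_or_ne n 0 with rfl | hn0
  · exact pow_zero _
  rw [← pow_apply' ψ hn0, orderOf_dvd_iff_pow_eq_one.mp hn, one_apply ht.isUnit]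

variable [Fintype F]

lemma exists_pow_orderOf_eq_of_apply_eq_one {R : Type*} [CommMonoidWithZero R]
    (ψ : MulChar F R) {t : F} (ht : t ≠ 0) (h : ψ t = 1) : ∃ a, a ^ orderOf ψ = t := by
  classical
  obtain ⟨g, hg⟩ := IsCyclic.exists_generator (α := Fˣ)
  obtain ⟨k, hk : g ^ k = Units.mk0 t ht⟩ := mem_powers_iff_mem_zpowers.mpr (hg (Units.mk0 t ht))
  have horder : orderOf ψ ∣ k := by
    rcases eq_or_ne k 0 with rfl | hk0
    · exact dvd_zero _
    refine orderOf_dvd_of_pow_eq_one ((eq_iff hg _ _).mpr ?_)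
    rw [pow_apply' ψ hk0, ← map_pow, ← Units.val_pow_eq_pow_val, hk, Units.val_mk0, h,
      one_apply (Units.isUnit g)]
  obtain ⟨j, rfl⟩ := horder
  exact ⟨(g : F) ^ j, by rw [← pow_mul, mul_comm, ← Units.val_pow_eq_pow_val, hk, Units.val_mk0]⟩

variable [DecidableEq F] {R : Type*} [CommRing R] [IsDomain R]

/-- The powers `ψ t ^ j` rather than the values `(ψ ^ j) t` make this hold at `t = 0` too, where
the trivial character vanishes. -/
lemma card_filter_pow_orderOf_eq (ψ : MulChar F R) {ζ : F} (hζ : IsPrimitiveRoot ζ (orderOf ψ))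
    (t : F) : (#{x | x ^ orderOf ψ = t} : R) = ∑ j ∈ range (orderOf ψ), ψ t ^ j := by
  have : NeZero (orderOf ψ) := ⟨ψ.orderOf_pos.ne'⟩
  rcases eq_or_ne t 0 with rfl | ht
  · rw [card_filter_pow_eq_zero (NeZero.ne _)]
    simp [zero_pow_eq, orderOf_pos_iff.mp ψ.orderOf_pos]
  rw [card_filter_pow_eq_of_isPrimitiveRoot hζ ht]
  split_ifs with hpow
  · obtain ⟨a, rfl⟩ := hpow
    have ha : a ≠ 0 := by rintro rfl; exact ht (zero_pow (NeZero.ne _))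
    simp [map_pow, ψ.apply_pow_eq_one dvd_rfl ha]
  · have hne : ψ t ≠ 1 := fun h => hpow (ψ.exists_pow_orderOf_eq_of_apply_eq_one ht h)
    have := geom_sum_mul (ψ t) (orderOf ψ)
    rw [ψ.apply_pow_eq_one dvd_rfl ht, sub_self] at this
    exact_mod_cast ((mul_eq_zero.mp this).resolve_right (sub_ne_zero.mpr hne)).symm

end MulChar

section JacobiSum

variable {F : Type*} [Field F] [Fintype F] {R : Type*} [CommRing R]

lemma sum_mul_apply_sub_eq_jacobiSum (χ φ : MulChar F R) {b : F} (hb : b ≠ 0) :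
    ∑ s, χ s * φ (s - b) = χ b * φ (-b) * jacobiSum χ φ := by
  rw [jacobiSum, mul_sum, ← Equiv.sum_comp (Equiv.mulLeft₀ b hb)]
  refine sum_congr rfl fun u _ => ?_
  rw [Equiv.mulLeft₀_apply, show b * u - b = -b * (1 - u) by ring, map_mul, map_mul]
  ring

lemma jacobiSum_pow_char (p : ℕ) [Fact p.Prime] [CharP F p] (χ φ : MulChar F R) :
    jacobiSum (χ ^ p) (φ ^ p) = jacobiSum χ φ := by
  have hp := (Fact.out : p.Prime).ne_zero
  refine Fintype.sum_bijective (frobenius F p) (bijective_frobenius F p) _ _ fun x => ?_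
  rw [MulChar.pow_apply' χ hp, MulChar.pow_apply' φ hp, ← map_pow, ← map_pow, sub_pow_char,
    one_pow, frobenius_def]

lemma jacobiSum_pow_two_eq_jacobiSum (p : ℕ) [Fact p.Prime] [CharP F p] (hp2 : Odd p)
    (hp3 : p % 3 = 2) {χ ψ : MulChar F R} (hχ : orderOf χ = 2) (hψ : orderOf ψ = 3) :
    jacobiSum χ (ψ ^ 2) = jacobiSum χ ψ :=
  calc jacobiSum χ (ψ ^ 2) = jacobiSum (χ ^ p) (ψ ^ p) := by
        rw [← pow_mod_orderOf χ p, ← pow_mod_orderOf ψ p, hχ, hψ, hp3, Nat.odd_iff.mp hp2,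
          pow_one]
    _ = jacobiSum χ ψ := jacobiSum_pow_char p χ ψ

lemma jacobiSum_mul_jacobiSum_pow_two {R : Type*} [Field R] (hR : ringChar R ≠ ringChar F)
    {χ ψ : MulChar F R} (hχ : orderOf χ = 2) (hψ : orderOf ψ = 3) :
    jacobiSum χ ψ * jacobiSum χ (ψ ^ 2) = Fintype.card F := by
  have hχinv : χ⁻¹ = χ := inv_eq_of_mul_eq_one_right (by rw [← sq, ← hχ, pow_orderOf_eq_one])
  have hψinv : ψ⁻¹ = ψ ^ 2 := inv_eq_of_mul_eq_one_right (by
    rw [← pow_succ', show 2 + 1 = orderOf ψ from hψ.symm, pow_orderOf_eq_one])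
  have hχψ : χ * ψ ≠ 1 := fun h => by
    have := congrArg orderOf (eq_inv_of_mul_eq_one_right h)
    rw [orderOf_inv, hχ, hψ] at this
    norm_num at this
  have hχ1 : χ ≠ 1 := by rintro rfl; simp at hχ
  have hψ1 : ψ ≠ 1 := by rintro rfl; simp at hψ
  simpa only [hχinv, hψinv] using jacobiSum_mul_jacobiSum_inv hR hχ1 hψ1 hχψ

variable [DecidableEq F] [IsDomain R]

lemma sum_apply_sq_sub_eq_jacobiSum (hF : ringChar F ≠ 2) {χ : MulChar F R} (hχ : orderOf χ = 2)
    {φ : MulChar F R} (hφ : φ ≠ 1) {b : F} (hb : b ≠ 0) :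
    ∑ y, φ (y ^ 2 - b) = χ b * φ (-b) * jacobiSum χ φ := by
  have hroot := IsPrimitiveRoot.neg_one (R := F) (ringChar F) hF
  have hsqrt (s : F) : (#{y | y ^ 2 = s} : R) = 1 + χ s := by
    rw [← hχ] at hroot ⊢
    rw [χ.card_filter_pow_orderOf_eq hroot, hχ, sum_range_succ, sum_range_one, pow_zero, pow_one]
  calc ∑ y, φ (y ^ 2 - b)
      = ∑ s, (1 + χ s) * φ (s - b) := by
        simp only [Fintype.sum_comp_eq_sum_card_mul (· ^ 2) (fun s => φ (s - b)), hsqrt]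
    _ = ∑ s, φ (s - b) + ∑ s, χ s * φ (s - b) := by
        simp only [add_mul, one_mul, sum_add_distrib]
    _ = χ b * φ (-b) * jacobiSum χ φ := by
        rw [Fintype.sum_equiv (Equiv.subRight b) (fun s => φ (s - b)) φ fun _ => rfl,
          MulChar.sum_eq_zero_of_ne_one hφ, zero_add, sum_mul_apply_sub_eq_jacobiSum χ φ hb]

end JacobiSum

namespace WeierstrassCurve

def mordell {R : Type*} [CommRing R] (b : R) : WeierstrassCurve R := ⟨0, 0, 0, 0, b⟩

section CommRing

variable {R : Type*} [CommRing R] (b : R)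

lemma mordell_Δ : (mordell b).Δ = -432 * b ^ 2 := by
  simp only [Δ, b₂, b₄, b₆, b₈, mordell]
  ring

lemma baseChange_mordell (A : Type*) [CommRing A] [Algebra R A] :
    (mordell b).baseChange A = mordell (algebraMap R A b) := by
  simp [mordell, baseChange, map]

lemma mordell_equation_iff (x y : R) :
    (mordell b).toAffine.Equation x y ↔ y ^ 2 = x ^ 3 + b := by
  rw [Affine.equation_iff]
  simp only [mordell]
  constructor <;> intro h <;> linear_combination h

variable {b}

lemma ne_zero_of_mordell_Δ_ne_zero (h : (mordell b).Δ ≠ 0) : b ≠ 0 := by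
  rintro rfl
  simp [mordell_Δ] at h

end CommRing

lemma ringChar_ne_two_of_mordell_Δ_ne_zero {F : Type*} [Field F] {b : F}
    (h : (mordell b).Δ ≠ 0) : ringChar F ≠ 2 := by
  intro h2
  have : (2 : F) = 0 := by exact_mod_cast h2 ▸ ringChar.Nat.cast_ringChar
  apply h
  rw [mordell_Δ, show (-432 : F) = -216 * 2 by norm_num, this]
  ring

lemma Affine.natCard_point {F : Type*} [Field F] [Finite F] {W : Affine F} (hΔ : W.Δ ≠ 0) :
    Nat.card W.Point = Nat.card {xy : F × F // W.Equation xy.1 xy.2} + 1 := by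
  rw [Nat.card_congr W.nonsingularPointEquiv, WithZero, Finite.card_option]
  exact congrArg (· + 1) <| Nat.card_congr <|
    Equiv.subtypeEquivRight fun _ => (W.equation_iff_nonsingular_of_Δ_ne_zero hΔ).symm

section FiniteField

variable {F : Type*} [Field F] [Fintype F] [DecidableEq F]

lemma natCard_point_mordell {b : F} (hΔ : (mordell b).Δ ≠ 0) :
    Nat.card (mordell b).toAffine.Point = ∑ y : F, #{x | x ^ 3 = y ^ 2 - b} + 1 := by
  rw [Affine.natCard_point hΔ]
  congr 1
  rw [Nat.card_congr (Equiv.subtypeEquivRight (q := fun xy : F × F => xy.1 ^ 3 = xy.2 ^ 2 - b)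
    fun xy => (mordell_equation_iff b xy.1 xy.2).trans (eq_comm.trans eq_sub_iff_add_eq.symm)),
    Nat.card_eq_fintype_card, Fintype.card_subtype, card_filter, Fintype.sum_prod_type_right]
  simp only [card_filter]

lemma three_dvd_sum_card_filter_pow_three_add_one (hF : ringChar F ≠ 2)
    (hF3 : 3 ∣ Fintype.card F - 1) {b : F} (hb0 : b ≠ 0) (hb : IsSquare b) :
    3 ∣ ∑ y, #{x | x ^ 3 = y ^ 2 - b} + 1 := by
  have : Fact (Nat.Prime 3) := ⟨Nat.prime_three⟩
  obtain ⟨ζ, hζ⟩ := FiniteField.exists_isPrimitiveRoot_of_dvd_card_sub_one 3 hF3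
  have hfibre (y : F) : (#{x | x ^ 3 = y ^ 2 - b} : ZMod 3) = if y ^ 2 = b then 1 else 0 := by
    split_ifs with hy
    · rw [hy, sub_self, card_filter_pow_eq_zero three_ne_zero, Nat.cast_one]
    · rw [card_filter_pow_eq_of_isPrimitiveRoot hζ (sub_ne_zero.mpr hy)]
      split_ifs <;> rfl
  have hsqrt : #{y | y ^ 2 = b} = 2 := by
    obtain ⟨r, rfl⟩ := hb
    rw [card_filter_pow_eq_of_isPrimitiveRoot (IsPrimitiveRoot.neg_one (ringChar F) hF) hb0,
      if_pos ⟨r, sq r⟩]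
  rw [← ZMod.natCast_eq_zero_iff]
  push_cast
  simp only [hfibre, sum_boole, hsqrt]
  rfl

variable {R : Type*} [CommRing R] [IsDomain R]

lemma sum_card_filter_pow_three_eq_jacobiSum (hF : ringChar F ≠ 2) {χ ψ : MulChar F R}
    (hχ : orderOf χ = 2) (hψ : orderOf ψ = 3) {b : F} (hb : b ≠ 0) (hχb : χ b = 1)
    (hψb : ψ (-b) = 1) :
    ((∑ y, #{x | x ^ 3 = y ^ 2 - b} : ℕ) : R) =
      Fintype.card F + jacobiSum χ ψ + jacobiSum χ (ψ ^ 2) := by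
  have : Fact (Nat.Prime 3) := ⟨Nat.prime_three⟩
  obtain ⟨ζ, hζ⟩ :=
    FiniteField.exists_isPrimitiveRoot_of_dvd_card_sub_one 3 (hψ ▸ ψ.orderOf_dvd_card_sub_one)
  have hcbrt (t : F) : (#{x | x ^ 3 = t} : R) = 1 + ψ t + (ψ ^ 2) t := by
    rw [← hψ] at hζ ⊢
    rw [ψ.card_filter_pow_orderOf_eq hζ, hψ, MulChar.pow_apply' ψ two_ne_zero]
    simp only [sum_range_succ, sum_range_zero, pow_zero, pow_one, zero_add]
  have hψ1 : ψ ≠ 1 := by rintro rfl; simp at hψ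
  have hψ2 : ψ ^ 2 ≠ 1 := fun h => by
    have := orderOf_dvd_of_pow_eq_one h
    rw [hψ] at this
    norm_num at this
  have hψ2b : (ψ ^ 2) (-b) = 1 := by rw [MulChar.pow_apply' ψ two_ne_zero, hψb, one_pow]
  push_cast
  simp only [hcbrt, sum_add_distrib, sum_const, card_univ, nsmul_one,
    sum_apply_sq_sub_eq_jacobiSum hF hχ hψ1 hb, sum_apply_sq_sub_eq_jacobiSum hF hχ hψ2 hb,
    hχb, hψb, hψ2b, one_mul]

end FiniteField

section CardEqSq

variable {K : Type*} [Field K] [Fintype K] [DecidableEq K] (p : ℕ) [Fact p.Prime] [CharP K p]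

lemma sum_card_filter_pow_three_eq_of_card_eq_sq (hK : Fintype.card K = p ^ 2) (hp : p % 3 = 2)
    (hF : ringChar K ≠ 2) {c : K} (hc : c ≠ 0) :
    ∑ y, #{x | x ^ 3 = y ^ 2 - c ^ (p + 1)} = p ^ 2 + 2 * p ∨
      ∑ y, #{x | x ^ 3 = y ^ 2 - c ^ (p + 1)} + 2 * p = p ^ 2 := by
  have hodd : Odd p := (Fact.out : p.Prime).odd_of_ne_two (by rwa [ringChar.eq K p] at hF)
  have hdvd : p + 1 ∣ Fintype.card K - 1 := hK ▸ p.add_one_dvd_sq_sub_one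
  have h2 : 2 ∣ p + 1 := hodd.add_one.two_dvd
  have h3 : 3 ∣ p + 1 := by omega
  obtain ⟨χ, hχ⟩ := MulChar.exists_mulChar_orderOf K (h2.trans hdvd)
    (Complex.isPrimitiveRoot_exp 2 two_ne_zero)
  obtain ⟨ψ, hψ⟩ := MulChar.exists_mulChar_orderOf K (h3.trans hdvd)
    (Complex.isPrimitiveRoot_exp 3 three_ne_zero)
  have hχb : χ (c ^ (p + 1)) = 1 := by rw [map_pow, χ.apply_pow_eq_one (hχ ▸ h2) hc]
  have hψb : ψ (-c ^ (p + 1)) = 1 := by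
    rw [neg_eq_neg_one_mul, show (-1 : K) = (-1) ^ 3 by norm_num, map_mul, map_pow, map_pow,
      ψ.apply_pow_eq_one hψ.dvd (neg_ne_zero.mpr one_ne_zero), ψ.apply_pow_eq_one (hψ ▸ h3) hc,
      one_mul]
  set N := ∑ y, #{x | x ^ 3 = y ^ 2 - c ^ (p + 1)}
  have hN := sum_card_filter_pow_three_eq_jacobiSum (R := ℂ) hF hχ hψ (pow_ne_zero _ hc) hχb hψb
  have hJJ := jacobiSum_mul_jacobiSum_pow_two (R := ℂ)
    (by simpa [ringChar.eq K p] using (Fact.out : p.Prime).ne_zero.symm) hχ hψ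
  rw [jacobiSum_pow_two_eq_jacobiSum p hodd hp hχ hψ, hK] at hN hJJ
  have hJ : jacobiSum χ ψ ^ 2 = (p : ℂ) ^ 2 := by rw [sq, hJJ]; push_cast; ring
  rcases sq_eq_sq_iff_eq_or_eq_neg.mp hJ with h | h
  · left; exact_mod_cast (show (N : ℂ) = p ^ 2 + 2 * p by rw [hN, h]; push_cast; ring)
  · right; exact_mod_cast (show (N : ℂ) + 2 * p = p ^ 2 by rw [hN, h]; push_cast; ring)

theorem natCard_point_mordell_of_card_eq_sq (hK : Fintype.card K = p ^ 2) (hp : p % 3 = 2)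
    {c : K} (hΔ : (mordell (c ^ (p + 1))).Δ ≠ 0) :
    Nat.card (mordell (c ^ (p + 1))).toAffine.Point = (p + 1) ^ 2 := by
  have hF := ringChar_ne_two_of_mordell_Δ_ne_zero hΔ
  have hb := ne_zero_of_mordell_Δ_ne_zero hΔ
  have hsq : IsSquare (c ^ (p + 1)) := by
    obtain ⟨k, hk⟩ := (Fact.out : p.Prime).odd_of_ne_two (by rwa [ringChar.eq K p] at hF)
    exact ⟨c ^ (k + 1), by rw [hk, ← pow_add]; ring_nf⟩
  have h3 := three_dvd_sum_card_filter_pow_three_add_one hF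
    (hK ▸ (show 3 ∣ p + 1 by omega).trans p.add_one_dvd_sq_sub_one) hb hsq
  rw [natCard_point_mordell hΔ]
  rcases sum_card_filter_pow_three_eq_of_card_eq_sq p hK hp hF (ne_zero_pow (by omega) hb)
    with h | h
  · rw [h]; ring
  · have : p ^ 2 % 3 = 1 := by rw [Nat.pow_mod, hp]
    omega

end CardEqSq

end WeierstrassCurve

lemma GaloisField.exists_pow_add_one_eq_algebraMap (p : ℕ) [Fact p.Prime] (c : ZMod p) :
    ∃ x : GaloisField p 2, x ^ (p + 1) = algebraMap (ZMod p) (GaloisField p 2) c := by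
  obtain ⟨x, rfl⟩ := FiniteField.norm_surjective (ZMod p) (GaloisField p 2) c
  refine ⟨x, ?_⟩
  rw [FiniteField.algebraMap_norm_eq_pow, GaloisField.card p 2 two_ne_zero, Nat.card_zmod,
    show p ^ 2 - 1 = (p + 1) * (p - 1) by rw [← Nat.sq_sub_sq, one_pow],
    Nat.mul_div_cancel _ (Nat.sub_pos_of_lt (Fact.out : p.Prime).one_lt)]

lemma ZMod.pow_three_bijective {p : ℕ} [Fact p.Prime] (hp : p % 3 = 2) :
    Function.Bijective fun x : ZMod p => x ^ 3 :=
  FiniteField.pow_bijective_of_coprime three_ne_zero <| by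
    rw [ZMod.card]
    exact (Nat.Prime.coprime_iff_not_dvd Nat.prime_three).mpr (by omega) |>.symm

/-- Let `p` be a prime with `p ≡ 2 (mod 3)` and `E : y² = x³ + B` an elliptic curve over `F_p`
(so `j(E) = 0`). Then `|E(F_p)| = p + 1` and `|E(F_{p²})| = (p + 1)²`. -/
theorem card_points_j_zero (p : ℕ) [Fact p.Prime] (hp : p % 3 = 2) (B : ZMod p)
    (W : WeierstrassCurve (ZMod p)) (hW : W = ⟨0, 0, 0, 0, B⟩) (hΔ : W.Δ ≠ 0) :
    Nat.card (WeierstrassCurve.Affine.baseChange W (ZMod p)).Point = p + 1 ∧ Nat.card (WeierstrassCurve.Affine.baseChange W (GaloisField p 2)).Point = (p + 1) ^ 2 := by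
  classical
  change W = mordell B at hW
  subst hW
  refine ⟨?_, ?_⟩
  · rw [Affine.baseChange, baseChange_mordell, Algebra.algebraMap_self, RingHom.id_apply,
      natCard_point_mordell hΔ]
    simp [card_filter_pow_eq_of_bijective (ZMod.pow_three_bijective hp)]
  · let : Fintype (GaloisField p 2) := Fintype.ofFinite _
    obtain ⟨c, hc⟩ := GaloisField.exists_pow_add_one_eq_algebraMap p B
    have hΔ' : (mordell (c ^ (p + 1))).Δ ≠ 0 := by
      rwa [hc, ← baseChange_mordell, baseChange, map_Δ, _root_.map_ne_zero]
    rw [Affine.baseChange, baseChange_mordell, ← hc]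
    exact natCard_point_mordell_of_card_eq_sq p
      (by rw [← Nat.card_eq_fintype_card, GaloisField.card p 2 two_ne_zero]) hp hΔ'
end

section
/- Let p be a prime with p ≡ 3 (mod 4) and let E be an elliptic curve over the finite field F_p given by y² = x³ + Ax (i.e. a short Weierstrass equation with B = 0, so j(E) = 1728). Then |E(F_p)| = p + 1 and |E(F_{p²})| = (p + 1)². -/
/-!
Over `𝔽_p` the quadratic character `χ` is odd (`-1` is a non-square as `p ≡ 3 mod 4`), so the
character sum `∑ χ(x³ + A x)` vanishes and `|E(𝔽_p)| = p + 1`. Over `K = 𝔽_{p²}` one has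
`|E(K)| = p² + 1 + φ(A)` with the Jacobsthal sum `φ(b) = ∑ χ(x) χ(x² + b)`. Jacobsthal's
identity `φ(b)² + φ(g b)² = 4 p²` (for a non-square `g`) together with `p ≡ 3 mod 4` leaves
`φ(A) ∈ {0, 2p, -2p}`. Finally `E(𝔽_p)` is a subgroup of `E(K)`; replacing `A` by `-A` if
necessary (this does not change `φ(A)`, as `-1` is a fourth power in `K`), the 2-torsion point
`(√-A, 0)` lies outside it, so `2 (p + 1)` divides `|E(K)|`, which singles out `φ(A) = 2p`.
-/

open WeierstrassCurve WeierstrassCurve.Affine Finset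

lemma FiniteField.ringChar_ne_two_of_odd_card {F : Type*} [Field F] [Fintype F]
    (h : Odd (Fintype.card F)) : ringChar F ≠ 2 := by
  rw [Ne, FiniteField.even_card_iff_char_two, Nat.odd_iff.mp h]
  omega

section QuadraticCharSums

variable {F : Type*} [Field F] [Fintype F] [DecidableEq F]

local notation "χ" => quadraticChar F
local notation "q" => (Fintype.card F : ℤ)

lemma quadraticChar_sum_mul_add_add (hF : ringChar F ≠ 2) (r s : F) :
    ∑ b, χ ((r + b) * (s + b)) = if r = s then q - 1 else -1 := by
  split_ifs with hrs
  · subst hrs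
    have hsq (b : F) : χ ((r + b) * (r + b)) = 1 - if b = -r then 1 else 0 := by
      split_ifs with hb
      · simp [hb]
      · rw [← sq, quadraticChar_sq_one' fun h => hb (eq_neg_of_add_eq_zero_right h), sub_zero]
    simp [hsq, sum_sub_distrib]
  · have hd : s - r ≠ 0 := sub_ne_zero.mpr (Ne.symm hrs)
    have hsplit (b : F) :
        χ ((r + b) * (s + b)) = χ (1 + (s - r) * (r + b)⁻¹) - if b = -r then 1 else 0 := by
      split_ifs with hb
      · simp [hb]
      · have hb' : r + b ≠ 0 := fun h => hb (eq_neg_of_add_eq_zero_right h)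
        rw [sub_zero, show (r + b) * (s + b) = (r + b) ^ 2 * (1 + (s - r) * (r + b)⁻¹) by
          field_simp; ring, map_mul, quadraticChar_sq_one' hb', one_mul]
    let e : F ≃ F := ((Equiv.addLeft r).trans (Equiv.inv F)).trans
      ((Equiv.mulLeft₀ (s - r) hd).trans (Equiv.addLeft 1))
    have hsum : ∑ b, χ (1 + (s - r) * (r + b)⁻¹) = 0 :=
      (e.sum_comp fun t => χ t).trans (quadraticChar_sum_zero hF)
    rw [sum_congr rfl fun b _ => hsplit b, sum_sub_distrib, hsum]
    simp

lemma natCard_sq_eq_apply (hF : ringChar F ≠ 2) (f : F → F) :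
    (Nat.card {P : F × F // P.2 ^ 2 = f P.1} : ℤ) = q + ∑ x, χ (f x) := by
  rw [Nat.card_congr (Equiv.subtypeProdEquivSigmaSubtype fun x y => y ^ 2 = f x),
    Nat.card_eq_fintype_card, Fintype.card_sigma, Nat.cast_sum]
  have hroots (x : F) : (Fintype.card {y // y ^ 2 = f x} : ℤ) = χ (f x) + 1 := by
    rw [← quadraticChar_card_sqrts hF, Set.toFinset_card]
    rfl
  simp_rw [hroots, sum_add_distrib, sum_const, card_univ, nsmul_eq_mul, mul_one, add_comm]

variable (F) in
def jacobsthalSum (b : F) : ℤ :=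
  ∑ x, χ x * χ (x ^ 2 + b)

lemma jacobsthalSum_zero (hF : ringChar F ≠ 2) : jacobsthalSum F 0 = 0 := by
  have h (x : F) : χ x * χ (x ^ 2 + 0) = χ x := by
    rcases eq_or_ne x 0 with rfl | hx
    · simp
    · rw [add_zero, quadraticChar_sq_one' hx, mul_one]
  simp only [jacobsthalSum, h, quadraticChar_sum_zero hF]

lemma jacobsthalSum_mul_sq (b : F) {c : F} (hc : c ≠ 0) :
    jacobsthalSum F (c ^ 2 * b) = χ c * jacobsthalSum F b := by
  rw [jacobsthalSum, jacobsthalSum, mul_sum]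
  refine (Fintype.sum_equiv (Equiv.mulLeft₀ c hc) _ _ fun x => ?_).symm
  rw [Equiv.mulLeft₀_apply, show (c * x) ^ 2 + c ^ 2 * b = c ^ 2 * (x ^ 2 + b) by ring, map_mul,
    map_mul, quadraticChar_sq_one' hc]
  ring

lemma sq_jacobsthalSum_mul_sq (b : F) {c : F} (hc : c ≠ 0) :
    jacobsthalSum F (c ^ 2 * b) ^ 2 = jacobsthalSum F b ^ 2 := by
  rw [jacobsthalSum_mul_sq b hc, mul_pow, quadraticChar_sq_one hc, one_mul]

lemma jacobsthalSum_eq_zero_of_quadraticChar_neg_one (h : χ (-1) = -1) (b : F) :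
    jacobsthalSum F b = 0 := by
  have hneg : jacobsthalSum F b = -jacobsthalSum F b := by
    rw [jacobsthalSum, ← sum_neg_distrib]
    refine Fintype.sum_equiv (Equiv.neg F) _ _ fun x => ?_
    rw [Equiv.neg_apply, neg_sq, neg_eq_neg_one_mul x, map_mul, h]
    ring
  linarith

lemma sum_sq_jacobsthalSum (hF : ringChar F ≠ 2) (h : χ (-1) = 1) :
    ∑ b, jacobsthalSum F b ^ 2 = 2 * q * (q - 1) := by
  have hexpand : ∑ b, jacobsthalSum F b ^ 2
      = ∑ x, ∑ y, χ x * χ y * (if x ^ 2 = y ^ 2 then q - 1 else -1) := by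
    simp_rw [jacobsthalSum, pow_two (∑ x : F, _), sum_mul_sum]
    rw [sum_comm]
    refine sum_congr rfl fun x _ => ?_
    rw [sum_comm]
    refine sum_congr rfl fun y _ => ?_
    rw [← quadraticChar_sum_mul_add_add hF (x ^ 2) (y ^ 2), mul_sum]
    refine sum_congr rfl fun b _ => ?_
    rw [map_mul]
    ring
  have hdiag (x : F) : ∑ y, χ x * χ y * (if x ^ 2 = y ^ 2 then q else 0)
      = if x = 0 then 0 else 2 * q := by
    split_ifs with hx
    · simp [hx]
    · have hroots : univ.filter (fun y => x ^ 2 = y ^ 2) = {x, -x} := by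
        ext y
        simp [@eq_comm _ (x ^ 2), sq_eq_sq_iff_eq_or_eq_neg]
      have hχneg : χ (-x) = χ x := by rw [neg_eq_neg_one_mul, map_mul, h, one_mul]
      simp_rw [mul_ite, mul_zero]
      have hxx : x ≠ -x := fun h' => hx ((Ring.eq_self_iff_eq_zero_of_char_ne_two hF).mp h'.symm)
      rw [← sum_filter, hroots, sum_pair hxx, hχneg, ← pow_two, quadraticChar_sq_one hx]
      ring
  have hχχ : ∑ x, ∑ y, χ x * χ y = 0 := by
    rw [← sum_mul_sum, quadraticChar_sum_zero hF, zero_mul]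
  calc ∑ b, jacobsthalSum F b ^ 2
      = ∑ x, ∑ y, χ x * χ y * (if x ^ 2 = y ^ 2 then q else 0)
          - ∑ x, ∑ y, χ x * χ y := by
        rw [hexpand, ← sum_sub_distrib]
        refine sum_congr rfl fun x _ => ?_
        rw [← sum_sub_distrib]
        refine sum_congr rfl fun y _ => ?_
        split_ifs <;> ring
    _ = 2 * q * (q - 1) := by
        rw [sum_congr rfl fun x _ => hdiag x, hχχ, sub_zero, sum_ite, sum_const_zero, zero_add,
          sum_const, filter_ne', card_erase_of_mem (mem_univ _), card_univ, nsmul_eq_mul,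
          Nat.cast_sub Fintype.card_pos]
        ring

lemma exists_eq_sq_mul_of_not_isSquare {g b : F} (hg : ¬IsSquare g) (hb : ¬IsSquare b) :
    ∃ c, c ≠ 0 ∧ b = c ^ 2 * g := by
  have hg0 : g ≠ 0 := by rintro rfl; exact hg IsSquare.zero
  have hb0 : b ≠ 0 := by rintro rfl; exact hb IsSquare.zero
  obtain ⟨d, hd⟩ : IsSquare (b * g) := by
    rw [← quadraticChar_one_iff_isSquare (mul_ne_zero hb0 hg0), map_mul,
      quadraticChar_neg_one_iff_not_isSquare.mpr hb, quadraticChar_neg_one_iff_not_isSquare.mpr hg]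
    norm_num
  refine ⟨d / g, fun hd0 => ?_, ?_⟩
  · rw [div_eq_zero_iff, or_iff_left hg0] at hd0
    simp [hd0, hb0, hg0] at hd
  · field_simp
    rw [sq, ← hd]

lemma sq_jacobsthalSum_add_sq (hF : ringChar F ≠ 2) (h : χ (-1) = 1) {g : F} (hg : ¬IsSquare g)
    {b : F} (hb : b ≠ 0) : jacobsthalSum F b ^ 2 + jacobsthalSum F (g * b) ^ 2 = 4 * q := by
  have hg0 : g ≠ 0 := by rintro rfl; exact hg IsSquare.zero
  set J := jacobsthalSum F
  -- `J b ^ 2` only depends on the square class of `b`, and `b ↦ g * b` swaps the two classes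
  have hconst (b : F) (hb : b ≠ 0) : J b ^ 2 + J (g * b) ^ 2 = J 1 ^ 2 + J g ^ 2 := by
    by_cases hsq : IsSquare b
    · obtain ⟨c, rfl⟩ := hsq
      have hc : c ≠ 0 := by rintro rfl; simp at hb
      rw [← sq, ← mul_one (c ^ 2), sq_jacobsthalSum_mul_sq _ hc, mul_one, mul_comm g,
        sq_jacobsthalSum_mul_sq _ hc]
    · obtain ⟨c, hc, rfl⟩ := exists_eq_sq_mul_of_not_isSquare hg hsq
      rw [sq_jacobsthalSum_mul_sq _ hc, show g * (c ^ 2 * g) = (c * g) ^ 2 * 1 by ring,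
        sq_jacobsthalSum_mul_sq _ (mul_ne_zero hc hg0), add_comm]
  have hsum : ∑ b, (J b ^ 2 + J (g * b) ^ 2) = 2 * ∑ b, J b ^ 2 := by
    rw [sum_add_distrib, two_mul,
      Fintype.sum_equiv (Equiv.mulLeft₀ g hg0) (fun b => J (g * b) ^ 2) (fun b => J b ^ 2)
        fun _ => rfl]
  have hsum' : ∑ b, (J b ^ 2 + J (g * b) ^ 2) = (q - 1) * (J 1 ^ 2 + J g ^ 2) := by
    rw [← sum_erase_add _ _ (mem_univ 0), sum_congr rfl fun b hb => hconst b (ne_of_mem_erase hb),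
      sum_const, card_erase_of_mem (mem_univ _), card_univ, nsmul_eq_mul,
      Nat.cast_sub Fintype.card_pos, mul_zero, show J 0 = 0 from jacobsthalSum_zero hF]
    push_cast
    ring
  have hq : q - 1 ≠ 0 := sub_ne_zero.mpr (by exact_mod_cast Fintype.one_lt_card.ne')
  have h1 : J 1 ^ 2 + J g ^ 2 = 4 * q := by
    apply mul_left_cancel₀ hq
    rw [← hsum', hsum, sum_sq_jacobsthalSum hF h]
    ring
  exact (hconst b hb).trans h1

end QuadraticCharSums

section QuadraticExtension

variable {F K : Type*} [Field F] [Fintype F] [Field K] [Fintype K] [Algebra F K]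

lemma isSquare_algebraMap_of_card_eq_sq (hK : Fintype.card K = Fintype.card F ^ 2)
    (hF : Odd (Fintype.card F)) (a : F) : IsSquare (algebraMap F K a) := by
  rcases eq_or_ne a 0 with rfl | ha
  · simp
  have hK2 : ringChar K ≠ 2 := FiniteField.ringChar_ne_two_of_odd_card (hK ▸ hF.pow)
  obtain ⟨k, hk⟩ := hF
  have hexp : Fintype.card K / 2 = (Fintype.card F - 1) * (k + 1) := by
    rw [hK, hk, show (2 * k + 1) ^ 2 = 2 * ((2 * k + 1 - 1) * (k + 1)) + 1 by
      rw [Nat.add_sub_cancel]; ring]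
    omega
  rw [FiniteField.isSquare_iff hK2 ((map_ne_zero _).mpr ha), hexp, pow_mul, ← map_pow,
    FiniteField.pow_card_sub_one_eq_one a ha, map_one, one_pow]

lemma isSquare_of_sq_eq_algebraMap (hK : Fintype.card K = Fintype.card F ^ 2)
    (hF : Fintype.card F % 4 = 3) {c : K} {a : F} (h : c ^ 2 = algebraMap F K a) : IsSquare c := by
  rcases eq_or_ne c 0 with rfl | hc
  · exact IsSquare.zero
  have ha : a ≠ 0 := by rintro rfl; simp [hc] at h
  have hK2 : ringChar K ≠ 2 :=
    FiniteField.ringChar_ne_two_of_odd_card (hK ▸ (Nat.odd_iff.mpr (by omega)).pow)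
  obtain ⟨k, hk⟩ : ∃ k, Fintype.card F = 4 * k + 3 := ⟨Fintype.card F / 4, by omega⟩
  have hexp : Fintype.card K / 2 = 2 * ((Fintype.card F - 1) * (k + 1)) := by
    rw [hK, hk, show (4 * k + 3) ^ 2 = 2 * (2 * ((4 * k + 3 - 1) * (k + 1))) + 1 by
      rw [show 4 * k + 3 - 1 = 4 * k + 2 by omega]; ring]
    omega
  rw [FiniteField.isSquare_iff hK2 hc, hexp, pow_mul, h, pow_mul, ← map_pow,
    FiniteField.pow_card_sub_one_eq_one a ha, map_one, one_pow]

lemma jacobsthalSum_algebraMap_neg [DecidableEq K] (hK : Fintype.card K = Fintype.card F ^ 2)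
    (hF : Fintype.card F % 4 = 3) (a : F) :
    jacobsthalSum K (algebraMap F K (-a)) = jacobsthalSum K (algebraMap F K a) := by
  obtain ⟨i, hi⟩ := isSquare_algebraMap_of_card_eq_sq hK (Nat.odd_iff.mpr (by omega)) (-1 : F)
  rw [← sq] at hi
  have hi0 : i ≠ 0 := by rintro rfl; simp at hi
  rw [show algebraMap F K (-a) = i ^ 2 * algebraMap F K a by rw [← hi, ← map_mul, neg_one_mul],
    jacobsthalSum_mul_sq _ hi0, (quadraticChar_one_iff_isSquare hi0).mpr
      (isSquare_of_sq_eq_algebraMap hK hF hi.symm), one_mul]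

end QuadraticExtension

lemma Int.natCast_dvd_of_dvd_sq_add_sq {p : ℕ} [Fact p.Prime] (hp : p % 4 = 3) {a b : ℤ}
    (h : (p : ℤ) ∣ a ^ 2 + b ^ 2) : (p : ℤ) ∣ a := by
  by_contra ha
  rw [← ZMod.intCast_zmod_eq_zero_iff_dvd] at h ha
  push_cast at h
  exact ZMod.mod_four_ne_three_of_sq_eq_neg_sq' ha (eq_neg_of_add_eq_zero_right h) hp

lemma eq_zero_or_eq_zero_of_sq_add_sq_eq_four_mul_sq {p : ℕ} [Fact p.Prime] (hp : p % 4 = 3)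
    {a b : ℤ} (h : a ^ 2 + b ^ 2 = 4 * p ^ 2) : a = 0 ∨ b = 0 := by
  have hdvd : (p : ℤ) ∣ a ^ 2 + b ^ 2 := h ▸ ⟨4 * p, by ring⟩
  obtain ⟨b', rfl⟩ := Int.natCast_dvd_of_dvd_sq_add_sq hp (add_comm (a ^ 2) _ ▸ hdvd)
  obtain ⟨a', rfl⟩ := Int.natCast_dvd_of_dvd_sq_add_sq hp hdvd
  have hp0 : (p : ℤ) ^ 2 ≠ 0 := pow_ne_zero _ (by exact_mod_cast (Fact.out : p.Prime).ne_zero)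
  have h4 : a' ^ 2 + b' ^ 2 = 4 := mul_left_cancel₀ hp0 (by linear_combination h)
  have ha' : -2 ≤ a' ∧ a' ≤ 2 := by constructor <;> nlinarith [sq_nonneg b']
  have hb' : -2 ≤ b' ∧ b' ≤ 2 := by constructor <;> nlinarith [sq_nonneg a']
  obtain ⟨ha₁, ha₂⟩ := ha'
  obtain ⟨hb₁, hb₂⟩ := hb'
  interval_cases a' <;> interval_cases b' <;> simp_all

lemma jacobsthalSum_eq_zero_or_sq_eq {K : Type*} [Field K] [Fintype K] [DecidableEq K] {p : ℕ}
    [Fact p.Prime] (hp : p % 4 = 3) (hK : Fintype.card K = p ^ 2) {b : K} (hb : b ≠ 0) :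
    jacobsthalSum K b = 0 ∨ jacobsthalSum K b ^ 2 = 4 * p ^ 2 := by
  have hK2 : ringChar K ≠ 2 :=
    FiniteField.ringChar_ne_two_of_odd_card (hK ▸ (Nat.odd_iff.mpr (by omega)).pow)
  have hχ : quadraticChar K (-1) = 1 :=
    (quadraticChar_one_iff_isSquare (neg_ne_zero.mpr one_ne_zero)).mpr
      (FiniteField.isSquare_neg_one_iff.mpr (by rw [hK, Nat.pow_mod, hp]; norm_num))
  obtain ⟨g, hg⟩ := FiniteField.exists_nonsquare hK2
  have h := sq_jacobsthalSum_add_sq hK2 hχ hg hb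
  rw [hK, Nat.cast_pow] at h
  refine (eq_zero_or_eq_zero_of_sq_add_sq_eq_four_mul_sq hp h).imp id fun h0 => ?_
  rw [h0] at h
  linarith

lemma AddSubgroup.two_mul_natCard_dvd {G : Type*} [AddCommGroup G] (H : AddSubgroup G) {x : G}
    (hx : x ∉ H) (h2x : 2 • x = 0) : 2 * Nat.card H ∣ Nat.card G := by
  rw [← H.card_mul_index, mul_comm 2]
  refine mul_dvd_mul_left _ ?_
  have hord : addOrderOf (x : G ⧸ H) = 2 :=
    addOrderOf_eq_prime (by rw [← QuotientAddGroup.mk_nsmul, h2x, QuotientAddGroup.mk_zero])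
      (by rwa [Ne, QuotientAddGroup.eq_zero_iff])
  exact hord ▸ _root_.addOrderOf_dvd_natCard _

namespace WeierstrassCurve.Affine

variable {F : Type*} [Field F]

def pointEquivOption (W : Affine F) (hΔ : W.Δ ≠ 0) :
    W.Point ≃ Option {P : F × F // W.Equation P.1 P.2} where
  toFun
    | .zero => none
    | .some x y h => some ⟨(x, y), h.1⟩
  invFun
    | none => .zero
    | some ⟨(x, y), h⟩ => .some x y ((W.equation_iff_nonsingular_of_Δ_ne_zero hΔ).mp h)
  left_inv P := by cases P <;> rfl
  right_inv o := by rcases o with _ | ⟨⟨x, y⟩, h⟩ <;> rfl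

lemma natCard_point_s8 [Fintype F] [DecidableEq F] (hF : ringChar F ≠ 2) (W : Affine F)
    (ha₁ : W.a₁ = 0) (ha₃ : W.a₃ = 0) (hΔ : W.Δ ≠ 0) :
    (Nat.card W.Point : ℤ) = Fintype.card F + 1 +
      ∑ x, quadraticChar F (x ^ 3 + W.a₂ * x ^ 2 + W.a₄ * x + W.a₆) := by
  have hsol : {P : F × F // W.Equation P.1 P.2}
      ≃ {P : F × F // P.2 ^ 2 = P.1 ^ 3 + W.a₂ * P.1 ^ 2 + W.a₄ * P.1 + W.a₆} :=
    Equiv.subtypeEquivRight fun P => by simp [equation_iff, ha₁, ha₃]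
  rw [Nat.card_congr ((W.pointEquivOption hΔ).trans (Equiv.optionCongr hsol)), Finite.card_option,
    Nat.cast_add, Nat.cast_one,
    natCard_sq_eq_apply hF fun x => x ^ 3 + W.a₂ * x ^ 2 + W.a₄ * x + W.a₆]
  ring

lemma Δ_j1728 (a : F) : (⟨0, 0, 0, a, 0⟩ : WeierstrassCurve F).Δ = -64 * a ^ 3 := by
  simp [WeierstrassCurve.Δ, WeierstrassCurve.b₂, WeierstrassCurve.b₄, WeierstrassCurve.b₆,
    WeierstrassCurve.b₈]
  ring

lemma Δ_j1728_ne_zero (hF : ringChar F ≠ 2) {a : F} (ha : a ≠ 0) :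
    (⟨0, 0, 0, a, 0⟩ : WeierstrassCurve F).Δ ≠ 0 := by
  rw [Δ_j1728, show (-64 : F) = -2 ^ 6 by norm_num]
  exact mul_ne_zero (neg_ne_zero.mpr (pow_ne_zero _ (Ring.two_ne_zero hF))) (pow_ne_zero _ ha)

lemma baseChange_j1728 (K : Type*) [Field K] [Algebra F K] (a : F) :
    (⟨0, 0, 0, a, 0⟩ : WeierstrassCurve F)⁄K = ⟨0, 0, 0, algebraMap F K a, 0⟩ := by
  simp [WeierstrassCurve.baseChange, WeierstrassCurve.map]

lemma two_mul_natCard_point_dvd {K : Type*} [Field K] [Algebra F K] (hK : ringChar K ≠ 2) {a : F}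
    (ha : ¬IsSquare (-a)) (hsq : IsSquare (algebraMap F K (-a))) :
    2 * Nat.card ((⟨0, 0, 0, a, 0⟩ : WeierstrassCurve F)⁄F).Point
      ∣ Nat.card ((⟨0, 0, 0, a, 0⟩ : WeierstrassCurve F)⁄K).Point := by
  classical
  set W : WeierstrassCurve F := ⟨0, 0, 0, a, 0⟩
  obtain ⟨r, hr⟩ := hsq
  have ha0 : a ≠ 0 := by rintro rfl; exact ha (by simp)
  have hns : (W⁄K).Nonsingular r 0 := by
    rw [← equation_iff_nonsingular_of_Δ_ne_zero, baseChange_j1728, equation_iff]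
    · rw [map_neg] at hr
      linear_combination r * hr
    · rw [baseChange_j1728]
      exact Δ_j1728_ne_zero hK ((map_ne_zero _).mpr ha0)
  -- the 2-torsion point `(r, 0)` is not defined over `F`, since `r ^ 2 = -a` is not a square there
  have hP : Point.some r 0 hns ∉ (Point.baseChange (W' := W) F K).range := by
    rintro ⟨_ | ⟨x, y, h⟩, hx⟩
    · cases hx
    · obtain ⟨rfl, -⟩ := Point.some.inj hx
      exact ha ⟨x, (algebraMap F K).injective (by rw [hr, map_mul]; rfl)⟩
  have h2P : 2 • Point.some r 0 hns = 0 := by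
    rw [two_nsmul]
    exact Point.add_of_Y_eq rfl (by simp [W])
  have hcard : Nat.card (Point.baseChange (W' := W) F K).range = Nat.card (W⁄F).Point :=
    Nat.card_congr (AddMonoidHom.ofInjective (Point.map_injective _)).toEquiv.symm
  exact hcard ▸ AddSubgroup.two_mul_natCard_dvd _ hP h2P

lemma natCard_point_j1728 [Fintype F] [DecidableEq F] (hF : ringChar F ≠ 2) {a : F}
    (ha : a ≠ 0) : (Nat.card (Point (⟨0, 0, 0, a, 0⟩ : WeierstrassCurve F)) : ℤ)
      = Fintype.card F + 1 + jacobsthalSum F a := by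
  rw [natCard_point_s8 hF _ rfl rfl (Δ_j1728_ne_zero hF ha), jacobsthalSum]
  congr 1
  refine Finset.sum_congr rfl fun x _ => ?_
  rw [← map_mul]
  ring_nf

lemma natCard_point_j1728_of_card_mod_four_eq_three [Fintype F] [DecidableEq F]
    (hF : Fintype.card F % 4 = 3) {a : F} (ha : a ≠ 0) :
    Nat.card (Point (⟨0, 0, 0, a, 0⟩ : WeierstrassCurve F)) = Fintype.card F + 1 := by
  have hF2 : ringChar F ≠ 2 :=
    FiniteField.ringChar_ne_two_of_odd_card (Nat.odd_iff.mpr (by omega))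
  have hχ : quadraticChar F (-1) = -1 :=
    quadraticChar_neg_one_iff_not_isSquare.mpr fun h => FiniteField.isSquare_neg_one_iff.mp h hF
  have := natCard_point_j1728 hF2 ha
  rw [jacobsthalSum_eq_zero_of_quadraticChar_neg_one hχ, add_zero] at this
  exact_mod_cast this

end WeierstrassCurve.Affine

lemma two_mul_card_add_one_dvd {F K : Type*} [Field F] [Fintype F] [DecidableEq F] [Field K]
    [Fintype K] [DecidableEq K] [Algebra F K] (hK : Fintype.card K = Fintype.card F ^ 2)
    (hF : Fintype.card F % 4 = 3) {a : F} (ha : a ≠ 0) :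
    2 * ((Fintype.card F : ℤ) + 1)
      ∣ Fintype.card K + 1 + jacobsthalSum K (algebraMap F K a) := by
  have hK2 : ringChar K ≠ 2 :=
    FiniteField.ringChar_ne_two_of_odd_card (hK ▸ (Nat.odd_iff.mpr (by omega)).pow)
  -- one of `a`, `-a` has a non-square negative in `F`, and both give the same sum over `K`
  obtain ⟨b, hb, hJ⟩ : ∃ b : F, ¬IsSquare (-b) ∧
      jacobsthalSum K (algebraMap F K b) = jacobsthalSum K (algebraMap F K a) := by
    by_cases h : IsSquare (-a)
    · refine ⟨-a, fun h' => ?_, jacobsthalSum_algebraMap_neg hK hF a⟩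
      rw [neg_neg] at h'
      exact FiniteField.isSquare_neg_one_iff.mp (by simpa [ha] using h.div h') hF
    · exact ⟨a, h, rfl⟩
  have hb0 : b ≠ 0 := by rintro rfl; exact hb (by simp)
  have hdvd := two_mul_natCard_point_dvd hK2 hb
    (isSquare_algebraMap_of_card_eq_sq hK (Nat.odd_iff.mpr (by omega)) _)
  rw [baseChange_j1728, baseChange_j1728, Algebra.algebraMap_self, RingHom.id_apply,
    natCard_point_j1728_of_card_mod_four_eq_three hF hb0] at hdvd
  rw [← hJ, ← natCard_point_j1728 hK2 ((map_ne_zero _).mpr hb0)]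
  exact_mod_cast hdvd

lemma eq_two_mul_of_two_mul_add_one_dvd {p s : ℤ} (hp : 3 ≤ p) (hodd : Odd p)
    (hs : s = 0 ∨ s ^ 2 = 4 * p ^ 2) (h : 2 * (p + 1) ∣ p ^ 2 + 1 + s) : s = 2 * p := by
  obtain ⟨m, rfl⟩ := hodd
  -- `2 (p + 1) ∣ (p + 1) ^ 2` as `p` is odd, so `2 (p + 1)` divides `s - 2 p ∈ {-2 p, 0, -4 p}`
  obtain ⟨k, hk⟩ : 2 * (2 * m + 1 + 1) ∣ s - 2 * (2 * m + 1) := by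
    have hsq : 2 * (2 * m + 1 + 1) ∣ (2 * m + 1 + 1) ^ 2 := Dvd.intro (m + 1) (by ring)
    have := dvd_sub h hsq
    rwa [show (2 * m + 1) ^ 2 + 1 + s - (2 * m + 1 + 1) ^ 2 = s - 2 * (2 * m + 1) by ring] at this
  rcases hs with rfl | hs
  · rcases le_or_gt 0 k with hk0 | hk0 <;> nlinarith
  · rcases sq_eq_sq_iff_eq_or_eq_neg.mp (hs.trans (by ring) : s ^ 2 = (2 * (2 * m + 1)) ^ 2)
      with h2 | rfl
    · exact h2
    · rcases le_or_gt (-1) k with hk0 | hk0 <;> nlinarith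

/-- Let `p` be a prime with `p ≡ 3 (mod 4)` and `E : y² = x³ + Ax` an elliptic curve over `F_p`
(so `j(E) = 1728`). Then `|E(F_p)| = p + 1` and `|E(F_{p²})| = (p + 1)²`. -/
theorem card_points_j_1728 (p : ℕ) [Fact p.Prime] (hp : p % 4 = 3) (A : ZMod p)
    (W : WeierstrassCurve (ZMod p)) (hW : W = ⟨0, 0, 0, A, 0⟩) (hΔ : W.Δ ≠ 0) :
    Nat.card (Affine.Point <| Affine.baseChange W (ZMod p)) = p + 1 ∧ Nat.card (Affine.Point <| Affine.baseChange W (GaloisField p 2)) = (p + 1) ^ 2 := by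
  classical
  subst hW
  let := Fintype.ofFinite (GaloisField p 2)
  have hA : A ≠ 0 := by rintro rfl; simp [Δ_j1728] at hΔ
  have hA' : algebraMap (ZMod p) (GaloisField p 2) A ≠ 0 := (map_ne_zero _).mpr hA
  have hF : Fintype.card (ZMod p) % 4 = 3 := by rwa [ZMod.card]
  have hK : Fintype.card (GaloisField p 2) = p ^ 2 := by
    rw [← Nat.card_eq_fintype_card, GaloisField.card p 2 two_ne_zero]
  have hK2 : ringChar (GaloisField p 2) ≠ 2 := by
    rw [ringChar.eq (GaloisField p 2) p]
    omega
  have hJ : jacobsthalSum _ (algebraMap (ZMod p) (GaloisField p 2) A) = 2 * p := by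
    refine eq_two_mul_of_two_mul_add_one_dvd (by omega) (Int.odd_iff.mpr (by omega))
      (jacobsthalSum_eq_zero_or_sq_eq hp hK hA') ?_
    have h := two_mul_card_add_one_dvd (by rw [hK, ZMod.card]) hF hA
    rw [hK, ZMod.card] at h
    exact_mod_cast h
  constructor
  · rw [baseChange_j1728, Algebra.algebraMap_self, RingHom.id_apply,
      natCard_point_j1728_of_card_mod_four_eq_three hF hA, ZMod.card]
  · have h := natCard_point_j1728 hK2 hA'
    rw [← baseChange_j1728, hK, hJ] at h
    zify
    rw [h]
    push_cast
    ring
end
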